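/- arXiv:0801.0812 — 2 statements merged into one kernel-verified Lean document; each statement's English description precedes it below -/
import Mathlib

section
/- Parabolic maximum principle: Let G=(V,E) be a locally finite graph, U ⊂ V finite, T > 0, and u : [0,T] × U → ℝ differentiable in the first variable satisfying ∂u/∂t + Δu ≤ 0 on [0,T] × Ů, where Ů = {x ∈ U : every neighbor of x lies in U}. Then u attains its maximum on the parabolic boundary ({0} × U) ∪ ([0,T] × ∂U), where ∂U = U \ Ů. -/
open scoped BigOperators

/-- The physical Laplacian of a locally finite graph (real-valued functions):
`Δ f x = ∑_{y ∼ x} (f x - f y)`. -/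
noncomputable def graphLap {V : Type*} (G : SimpleGraph V) [G.LocallyFinite]
    (f : V → ℝ) (x : V) : ℝ :=
  ∑ y ∈ G.neighborFinset x, (f x - f y)

/-- At a max on `Icc 0 T` at a point `t₀ > 0`, a derivative within `Icc 0 T` of `f` is
nonnegative. -/
lemma deriv_nonneg_of_isMaxOn {f : ℝ → ℝ} {d T t₀ : ℝ} (ht₀ : 0 < t₀)
    (hmem : t₀ ∈ Set.Icc 0 T)
    (hmax : IsMaxOn f (Set.Icc 0 T) t₀)
    (hf : HasDerivWithinAt f d (Set.Icc 0 T) t₀) : 0 ≤ d := by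
  have hy : (-t₀ : ℝ) ∈ posTangentConeAt (Set.Icc 0 T) t₀ := by
    apply mem_posTangentConeAt_of_segment_subset
    have h0 : (0 : ℝ) ∈ Set.Icc 0 T := ⟨le_rfl, le_trans ht₀.le hmem.2⟩
    simpa using (convex_Icc (0:ℝ) T).segment_subset hmem (by simpa using h0)
  have := hmax.localize.hasFDerivWithinAt_nonpos hf.hasFDerivWithinAt hy
  simp only [ContinuousLinearMap.smulRight_apply, ContinuousLinearMap.one_apply,
    ContinuousLinearMap.toSpanSingleton_apply, smul_eq_mul] at this
  nlinarith

/-- **Parabolic maximum principle.**  If `u` is differentiable in `t` and satisfies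
`∂u/∂t + Δu ≤ 0` on `[0,T] × Ů` (with `Ů` the interior of the finite set `U`),
then `u` attains its maximum over `[0,T] × U` on the parabolic boundary
`({0} × U) ∪ ([0,T] × ∂U)`. -/
theorem parabolic_maximum_principle
    {V : Type*} (G : SimpleGraph V) [G.LocallyFinite]
    (U : Finset V) (hUne : U.Nonempty) (T : ℝ) (hT : 0 < T)
    (u : ℝ → V → ℝ)
    (hdiff : ∀ x ∈ U, DifferentiableOn ℝ (fun t => u t x) (Set.Icc 0 T))
    (hheat : ∀ t ∈ Set.Icc (0 : ℝ) T, ∀ x ∈ U, (∀ y, G.Adj x y → y ∈ U) →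
      derivWithin (fun s => u s x) (Set.Icc 0 T) t + graphLap G (u t) x ≤ 0) :
    ∃ t₀ ∈ Set.Icc (0 : ℝ) T, ∃ x₀ ∈ U,
      (t₀ = 0 ∨ ¬(∀ y, G.Adj x₀ y → y ∈ U)) ∧
      ∀ t ∈ Set.Icc (0 : ℝ) T, ∀ x ∈ U, u t x ≤ u t₀ x₀ := by
  classical
  have h0T : (0 : ℝ) ∈ Set.Icc (0 : ℝ) T := ⟨le_rfl, hT.le⟩
  have hcont : ∀ x ∈ U, ContinuousOn (fun t => u t x) (Set.Icc 0 T) :=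
    fun x hx => (hdiff x hx).continuousOn
  set P : V → Prop := fun x => ∀ y, G.Adj x y → y ∈ U with hP
  -- boundary-value function
  set g : V → ℝ → ℝ := fun x t => if P x then u 0 x else u t x with hg
  -- choose, for each x, a time maximizing g x
  have hgc : ∀ x ∈ U, ContinuousOn (g x) (Set.Icc 0 T) := by
    intro x hx
    by_cases hpx : P x
    · simp only [hg, if_pos hpx]; exact continuousOn_const
    · simp only [hg, if_neg hpx]; exact hcont x hx
  have hs : ∀ x ∈ U, ∃ s ∈ Set.Icc (0:ℝ) T, IsMaxOn (g x) (Set.Icc 0 T) s := by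
    intro x hx
    exact isCompact_Icc.exists_isMaxOn ⟨0, h0T⟩ (hgc x hx)
  choose! s hsmem hsmax using hs
  obtain ⟨x₀, hx₀U, hx₀max⟩ := U.exists_max_image (fun x => g x (s x)) hUne
  set t₀ : ℝ := if P x₀ then 0 else s x₀ with ht₀def
  have ht₀mem : t₀ ∈ Set.Icc (0:ℝ) T := by
    by_cases hpx : P x₀
    · rw [ht₀def, if_pos hpx]; exact h0T
    · rw [ht₀def, if_neg hpx]; exact hsmem x₀ hx₀U
  have ht₀val : u t₀ x₀ = g x₀ (s x₀) := by
    by_cases hpx : P x₀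
    · rw [ht₀def, if_pos hpx]
      show u 0 x₀ = if P x₀ then u 0 x₀ else u (s x₀) x₀
      rw [if_pos hpx]
    · rw [ht₀def, if_neg hpx]
      show u (s x₀) x₀ = if P x₀ then u 0 x₀ else u (s x₀) x₀
      rw [if_neg hpx]
  refine ⟨t₀, ht₀mem, x₀, hx₀U, ?_, ?_⟩
  · by_cases hpx : P x₀
    · left; rw [ht₀def, if_pos hpx]
    · right; exact hpx
  -- main estimate
  intro t ht x hx
  -- it suffices to prove the bound up to any ε > 0
  refine le_of_forall_pos_le_add ?_
  intro δ hδ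
  set ε : ℝ := δ / T with hε
  have hεpos : 0 < ε := div_pos hδ hT
  -- maximize v = u - ε t
  have hr : ∀ x' ∈ U, ∃ r ∈ Set.Icc (0:ℝ) T,
      IsMaxOn (fun s => u s x' - ε * s) (Set.Icc 0 T) r := by
    intro x' hx'
    exact isCompact_Icc.exists_isMaxOn ⟨0, h0T⟩
      ((hcont x' hx').sub (continuousOn_const.mul continuousOn_id))
  choose! r hrmem hrmax using hr
  obtain ⟨x₁, hx₁U, hx₁max⟩ := U.exists_max_image (fun x' => u (r x') x' - ε * r x') hUne
  set t₁ : ℝ := r x₁ with ht₁def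
  have ht₁mem : t₁ ∈ Set.Icc (0:ℝ) T := hrmem x₁ hx₁U
  -- global maximality of (t₁, x₁) for v
  have hglob : ∀ t' ∈ Set.Icc (0:ℝ) T, ∀ x' ∈ U,
      u t' x' - ε * t' ≤ u t₁ x₁ - ε * t₁ := by
    intro t' ht' x' hx'
    exact le_trans (hrmax x' hx' ht') (hx₁max x' hx')
  -- the maximizer lies on the parabolic boundary
  have hbd : t₁ = 0 ∨ ¬ P x₁ := by
    by_contra hcon
    push_neg at hcon
    obtain ⟨ht₁ne, hPx₁⟩ := hcon
    have ht₁pos : 0 < t₁ := lt_of_le_of_ne ht₁mem.1 (Ne.symm ht₁ne)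
    -- derivative bound
    set d : ℝ := derivWithin (fun s => u s x₁) (Set.Icc 0 T) t₁ with hd
    have hder : HasDerivWithinAt (fun s => u s x₁ - ε * s) (d - ε) (Set.Icc 0 T) t₁ := by
      have h1 : HasDerivWithinAt (fun s => u s x₁) d (Set.Icc 0 T) t₁ :=
        ((hdiff x₁ hx₁U) t₁ ht₁mem).hasDerivWithinAt
      have h2 : HasDerivWithinAt (fun s : ℝ => ε * s) ε (Set.Icc 0 T) t₁ := by
        simpa using (hasDerivWithinAt_id t₁ (Set.Icc 0 T)).const_mul ε
      exact h1.sub h2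
    have hd_ge : ε ≤ d := by
      have hmax' : IsMaxOn (fun s => u s x₁ - ε * s) (Set.Icc 0 T) t₁ := hrmax x₁ hx₁U
      have := deriv_nonneg_of_isMaxOn ht₁pos ht₁mem hmax' hder
      linarith
    -- Laplacian nonneg
    have hlap : 0 ≤ graphLap G (u t₁) x₁ := by
      apply Finset.sum_nonneg
      intro y hy
      have hyU : y ∈ U := hPx₁ y ((SimpleGraph.mem_neighborFinset G x₁ y).1 hy)
      have := hglob t₁ ht₁mem y hyU
      linarith
    have := hheat t₁ ht₁mem x₁ hx₁U hPx₁
    rw [← hd] at this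
    linarith
  -- value at (t₁,x₁) is bounded by the chosen boundary max
  have hbound : u t₁ x₁ ≤ u t₀ x₀ := by
    rw [ht₀val]
    rcases hbd with h0 | hnp
    · by_cases hpx : P x₁
      · have : u t₁ x₁ = g x₁ (s x₁) := by
          show u t₁ x₁ = if P x₁ then u 0 x₁ else u (s x₁) x₁
          rw [if_pos hpx, h0]
        rw [this]; exact hx₀max x₁ hx₁U
      · have : u t₁ x₁ = g x₁ t₁ := by
          show u t₁ x₁ = if P x₁ then u 0 x₁ else u t₁ x₁
          rw [if_neg hpx]
        rw [this]
        exact le_trans (hsmax x₁ hx₁U ht₁mem) (hx₀max x₁ hx₁U)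
    · have : u t₁ x₁ = g x₁ t₁ := by
        show u t₁ x₁ = if P x₁ then u 0 x₁ else u t₁ x₁
        rw [if_neg hnp]
      rw [this]
      exact le_trans (hsmax x₁ hx₁U ht₁mem) (hx₀max x₁ hx₁U)
  -- conclude
  have h1 : u t x - ε * t ≤ u t₁ x₁ - ε * t₁ := hglob t ht x hx
  have hεt₁ : 0 ≤ ε * t₁ := mul_nonneg hεpos.le ht₁mem.1
  have hεt : ε * t ≤ ε * T := mul_le_mul_of_nonneg_left ht.2 hεpos.le
  have hεT : ε * T = δ := by rw [hε, div_mul_cancel₀ δ hT.ne']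
  linarith
end

section
/- Uniqueness of bounded solutions of the heat equation under a weak curvature bound: Let G=(V,E) be a connected, locally finite graph such that there exist x₀ ∈ V and C ≥ 0 with Δd(·,x₀) ≥ −C, where d is the graph distance. Then any bounded solution u : [0,T) × V → ℝ of ∂u/∂t + Δu = 0 with u(0,·) = u₀ is uniquely determined by u₀, and moreover satisfies |u(t,x)| ≤ sup_{x∈V}|u₀(x)| for all (t,x) ∈ [0,T) × V. -/
open scoped BigOperators
open Set Filter Topology

set_option maxHeartbeats 1000000

lemma ball_finite {V : Type*} (G : SimpleGraph V) [G.LocallyFinite] (hG : G.Connected)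
    (x₀ : V) : ∀ n : ℕ, {x | G.dist x x₀ ≤ n}.Finite := by
  intro n
  induction n with
  | zero =>
    apply Set.Finite.subset (Set.finite_singleton x₀)
    intro x hx
    simp only [Set.mem_setOf_eq, Nat.le_zero] at hx
    exact (hG.dist_eq_zero_iff.mp hx)
  | succ n ih =>
    apply Set.Finite.subset (ih.union (ih.biUnion (fun y _ => (G.neighborFinset y).finite_toSet)))
    intro x hx
    simp only [Set.mem_setOf_eq] at hx
    rcases Nat.lt_or_ge (G.dist x x₀) (n+1) with h | h
    · exact Or.inl (Nat.lt_succ_iff.mp h)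
    · have hd : G.dist x x₀ = n + 1 := le_antisymm hx h
      obtain ⟨p, hp⟩ := hG.exists_walk_length_eq_dist x x₀
      rw [hd] at hp
      cases p with
      | nil => simp at hp
      | @cons _ y _ hadj q =>
        right
        have h1 : y ∈ {x | G.dist x x₀ ≤ n} := by
          simp only [Set.mem_setOf_eq]
          calc G.dist y x₀ ≤ q.length := SimpleGraph.dist_le q
          _ = n := by simpa using hp
        have h2 : x ∈ (G.neighborFinset y : Set V) := by simp [hadj.symm]
        exact Set.mem_biUnion h1 h2

lemma deriv_nonneg_of_isMaxOn_s18 {f : ℝ → ℝ} {d t T t₁ : ℝ}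
    (hd : HasDerivWithinAt f d (Set.Ico 0 T) t) (ht : 0 < t) (htT : t ≤ T) (ht₁ : t ≤ t₁)
    (hmax : ∀ s ∈ Set.Icc 0 t₁, f s ≤ f t) : 0 ≤ d := by
  have h2 : HasDerivWithinAt f d (Ioo 0 t) t :=
    hd.mono (fun s hs => ⟨le_of_lt hs.1, lt_of_lt_of_le hs.2 htT⟩)
  rw [hasDerivWithinAt_iff_tendsto_slope] at h2
  have hss : Ioo (0:ℝ) t \ {t} = Ioo 0 t :=
    Set.diff_singleton_eq_self (fun h => absurd h.2 (lt_irrefl t))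
  rw [hss] at h2
  have : (𝓝[Ioo (0:ℝ) t] t).NeBot := right_nhdsWithin_Ioo_neBot ht
  refine ge_of_tendsto h2 ?_
  filter_upwards [self_mem_nhdsWithin] with s hs
  have h1 : f s ≤ f t := hmax s ⟨le_of_lt hs.1, le_trans (le_of_lt hs.2) ht₁⟩
  rw [slope_def_field, div_nonneg_iff]
  have := hs.2
  first
  | exact Or.inl ⟨by linarith, by linarith⟩
  | exact Or.inr ⟨by linarith, by linarith⟩

lemma graphLap_neg {V : Type*} (G : SimpleGraph V) [G.LocallyFinite] (f : V → ℝ) (x : V) :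
    graphLap G (fun y => -f y) x = -graphLap G f x := by
  unfold graphLap
  rw [← Finset.sum_neg_distrib]
  exact Finset.sum_congr rfl fun y _ => by ring

lemma graphLap_sub {V : Type*} (G : SimpleGraph V) [G.LocallyFinite] (f g : V → ℝ) (x : V) :
    graphLap G (fun y => f y - g y) x = graphLap G f x - graphLap G g x := by
  unfold graphLap
  rw [← Finset.sum_sub_distrib]
  exact Finset.sum_congr rfl fun y _ => by ring

lemma heat_max_principle {V : Type*} (G : SimpleGraph V) [G.LocallyFinite]
    (hG : G.Connected) (x₀ : V) (C : ℝ) (hC : 0 ≤ C)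
    (hcurv : ∀ x, -C ≤ graphLap G (fun y => (G.dist y x₀ : ℝ)) x)
    (T : ℝ) (hT : 0 < T) (w : ℝ → V → ℝ) (M : ℝ)
    (hbdd : ∀ t ∈ Set.Ico (0 : ℝ) T, ∀ x, |w t x| ≤ M)
    (hheat : ∀ t ∈ Set.Ico (0 : ℝ) T, ∀ x,
      HasDerivWithinAt (fun s => w s x) (-(graphLap G (w t) x)) (Set.Ico 0 T) t)
    (M₀ : ℝ) (hM₀ : 0 ≤ M₀) (h0 : ∀ x, w 0 x ≤ M₀) :
    ∀ t ∈ Set.Ico (0 : ℝ) T, ∀ x, w t x ≤ M₀ := by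
  intro t ht x
  have hM : 0 ≤ M := le_trans (abs_nonneg _) (hbdd 0 ⟨le_refl 0, hT⟩ x)
  -- main estimate for each radius R ≥ 1
  have key : ∀ R : ℕ, 1 ≤ R →
      w t x ≤ M₀ + ((M + M₀) / R) * ((G.dist x x₀ : ℝ) + C * t) := by
    intro R hR
    set K : ℝ := (M + M₀) / R with hKdef
    clear_value K
    have hRpos : (0 : ℝ) < R := by exact_mod_cast hR
    have hK : 0 ≤ K := hKdef ▸ div_nonneg (by linarith) hRpos.le
    have hKR : K * R = M + M₀ := by rw [hKdef]; field_simp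
    set h : ℝ → V → ℝ := fun s y => w s y - (M₀ + K * ((G.dist y x₀ : ℝ) + C * s))
      with hdef
    clear_value h
    -- outside the ball of radius R the barrier dominates trivially
    have hout : ∀ s ∈ Set.Ico (0 : ℝ) T, ∀ y, (R : ℝ) ≤ (G.dist y x₀ : ℝ) → h s y ≤ 0 := by
      intro s hs y hy
      have h1 : w s y ≤ M := le_trans (le_abs_self _) (hbdd s hs y)
      have h2 : K * (R : ℝ) ≤ K * ((G.dist y x₀ : ℝ) + C * s) := by
        apply mul_le_mul_of_nonneg_left _ hK
        nlinarith [mul_nonneg hC hs.1]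
      simp only [hdef]
      nlinarith
    have hzero : ∀ y, h 0 y ≤ 0 := by
      intro y
      have := h0 y
      have hd0 : (0:ℝ) ≤ (G.dist y x₀ : ℝ) := Nat.cast_nonneg _
      simp only [hdef]
      nlinarith
    -- the main claim : h ≤ 0 everywhere
    have main : ∀ s ∈ Set.Ico (0 : ℝ) T, ∀ y, h s y ≤ 0 := by
      by_contra hcon
      push_neg at hcon
      obtain ⟨t₁, ht₁, x₁, hx₁⟩ := hcon
      have ht₁pos : 0 < t₁ := by
        rcases lt_or_eq_of_le ht₁.1 with h' | h'
        · exact h'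
        · exfalso; rw [← h'] at hx₁; exact absurd (hzero x₁) (not_le.mpr hx₁)
      have hx₁R : (G.dist x₁ x₀ : ℝ) < R := by
        by_contra h'
        exact absurd (hout t₁ ht₁ x₁ (not_lt.mp h')) (not_le.mpr hx₁)
      set δ : ℝ := h t₁ x₁ / (2 * t₁) with hδdef
      clear_value δ
      have hδ : 0 < δ := hδdef ▸ div_pos hx₁ (by linarith)
      have hδt₁ : δ * t₁ = h t₁ x₁ / 2 := by
        rw [hδdef]; field_simp
      -- the finite ball
      set B : Finset V := (ball_finite G hG x₀ R).toFinset with hBdef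
      have hmemB : ∀ y : V, G.dist y x₀ ≤ R → y ∈ B := by
        intro y hy; rw [hBdef, Set.Finite.mem_toFinset]; exact hy
      clear_value B
      have hx₁B : x₁ ∈ B := hmemB x₁ (by exact_mod_cast hx₁R.le)
      -- the perturbed function
      set hd : ℝ → V → ℝ := fun s y => h s y - δ * s with hddef
      clear_value hd
      -- continuity in time on [0, t₁]
      have hsub : Set.Icc (0:ℝ) t₁ ⊆ Set.Ico 0 T :=
        fun s hs => ⟨hs.1, lt_of_le_of_lt hs.2 ht₁.2⟩
      have hcont : ∀ y : V, ContinuousOn (fun s => hd s y) (Set.Icc 0 t₁) := by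
        intro y
        have hw : ContinuousOn (fun s => w s y) (Set.Icc 0 t₁) := by
          intro s hs
          exact ((hheat s (hsub hs) y).continuousWithinAt).mono hsub
        simp only [hddef, hdef]
        exact (hw.sub ((by continuity : Continuous fun s : ℝ =>
          M₀ + K * ((G.dist y x₀ : ℝ) + C * s)).continuousOn)).sub
          ((by continuity : Continuous fun s : ℝ => δ * s).continuousOn)
      -- choose a time maximum for each vertex
      have hmaxsel : ∀ y : V, ∃ ty ∈ Set.Icc (0:ℝ) t₁,
          ∀ s ∈ Set.Icc (0:ℝ) t₁, hd s y ≤ hd ty y := by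
        intro y
        obtain ⟨ty, hty, hmax⟩ := isCompact_Icc.exists_isMaxOn
          (Set.nonempty_Icc.mpr ht₁pos.le) (hcont y)
        exact ⟨ty, hty, fun s hs => hmax hs⟩
      choose tof htofmem htofmax using hmaxsel
      -- choose the spatial maximum over the finite ball
      obtain ⟨xs, hxsB, hxsmax⟩ := B.exists_max_image (fun y => hd (tof y) y) ⟨x₁, hx₁B⟩
      set ts : ℝ := tof xs with htsdef
      clear_value ts
      set A : ℝ := hd ts xs with hAdef
      clear_value A
      have htsmem : ts ∈ Set.Icc (0:ℝ) t₁ := by rw [htsdef]; exact htofmem xs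
      have htsIco : ts ∈ Set.Ico (0:ℝ) T := hsub htsmem
      have hmaxglobal : ∀ s ∈ Set.Icc (0:ℝ) t₁, ∀ y ∈ B, hd s y ≤ A :=
        fun s hs y hy => le_trans (htofmax y s hs) (hxsmax y hy)
      have hA : 0 < A := by
        have h1 : hd t₁ x₁ ≤ A :=
          hmaxglobal t₁ ⟨ht₁pos.le, le_refl _⟩ x₁ hx₁B
        have : hd t₁ x₁ = h t₁ x₁ / 2 := by
          simp only [hddef]; rw [hδt₁]; ring
        rw [this] at h1; linarith
      have hxsR : (G.dist xs x₀ : ℝ) < R := by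
        by_contra h'
        have := hout ts htsIco xs (not_lt.mp h')
        have hδts : 0 ≤ δ * ts := mul_nonneg hδ.le htsmem.1
        have : A ≤ 0 := by simp only [hAdef, hddef]; linarith
        linarith
      have htspos : 0 < ts := by
        rcases lt_or_eq_of_le htsmem.1 with h' | h'
        · exact h'
        · exfalso
          have : A = h 0 xs := by simp only [hAdef, hddef, ← h']; ring
          have := hzero xs; linarith
      -- neighbors of xs are in the ball
      have hnbB : ∀ y, G.Adj xs y → y ∈ B := by
        intro y hadj
        apply hmemB
        have h1 : G.dist y x₀ ≤ G.dist y xs + G.dist xs x₀ := hG.dist_triangle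
        have h2 : G.dist y xs ≤ 1 := by
          have := SimpleGraph.dist_le (SimpleGraph.Walk.cons hadj.symm SimpleGraph.Walk.nil)
          simpa using this
        have h3 : G.dist xs x₀ + 1 ≤ R := by exact_mod_cast hxsR
        omega
      -- spatial estimate : the Laplacian of w at (ts, xs) is bounded below
      have hlap : K * graphLap G (fun y => (G.dist y x₀ : ℝ)) xs ≤ graphLap G (w ts) xs := by
        unfold graphLap
        rw [Finset.mul_sum]
        apply Finset.sum_le_sum
        intro y hy
        have hadj : G.Adj xs y := (SimpleGraph.mem_neighborFinset _ _ _).mp hy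
        have hyB : y ∈ B := hnbB y hadj
        have := hmaxglobal ts htsmem y hyB
        simp only [hAdef, hddef, hdef] at this ⊢
        nlinarith
      have hlapbound : -(K * C) ≤ graphLap G (w ts) xs := by
        have := mul_le_mul_of_nonneg_left (hcurv xs) hK
        calc -(K * C) = K * (-C) := by ring
        _ ≤ K * graphLap G (fun y => (G.dist y x₀ : ℝ)) xs := this
        _ ≤ graphLap G (w ts) xs := hlap
      -- temporal estimate : derivative of the reduced function at the max is ≥ 0
      set φ : ℝ → ℝ := fun s => w s xs - (K * C + δ) * s with hφdef
      clear_value φ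
      have hφder : HasDerivWithinAt φ (-(graphLap G (w ts) xs) - (K * C + δ))
          (Set.Ico 0 T) ts := by
        have h1 := hheat ts htsIco xs
        have h2 : HasDerivWithinAt (fun s : ℝ => (K * C + δ) * s) ((K * C + δ) * 1)
            (Set.Ico 0 T) ts := (hasDerivWithinAt_id ts _).const_mul _
        have h3 := h1.fun_sub h2
        rw [hφdef]
        simpa using h3
      have hφmax : ∀ s ∈ Set.Icc (0:ℝ) t₁, φ s ≤ φ ts := by
        intro s hs
        have := hmaxglobal s hs xs hxsB
        simp only [hAdef, hddef, hdef, hφdef] at this ⊢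
        nlinarith
      have := deriv_nonneg_of_isMaxOn_s18 hφder htspos htsIco.2.le htsmem.2 hφmax
      linarith
    -- conclude
    have := main t ht x
    simp only [hdef] at this
    linarith
  -- take the limit R → ∞
  have hlim : Filter.Tendsto (fun R : ℕ => M₀ + ((M + M₀) / R) * ((G.dist x x₀ : ℝ) + C * t))
      Filter.atTop (𝓝 M₀) := by
    have h1 : Filter.Tendsto (fun R : ℕ => (M + M₀) / R) Filter.atTop (𝓝 0) := by
      have := tendsto_one_div_atTop_nhds_zero_nat.const_mul (M + M₀)
      simpa [div_eq_mul_inv, mul_comm] using this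
    have := (h1.mul_const ((G.dist x x₀ : ℝ) + C * t)).const_add M₀
    simpa using this
  refine ge_of_tendsto hlim ?_
  filter_upwards [Filter.eventually_ge_atTop 1] with R hR
  exact key R hR

lemma heat_max_principle_abs {V : Type*} (G : SimpleGraph V) [G.LocallyFinite]
    (hG : G.Connected) (x₀ : V) (C : ℝ) (hC : 0 ≤ C)
    (hcurv : ∀ x, -C ≤ graphLap G (fun y => (G.dist y x₀ : ℝ)) x)
    (T : ℝ) (hT : 0 < T) (w : ℝ → V → ℝ) (M : ℝ)
    (hbdd : ∀ t ∈ Set.Ico (0 : ℝ) T, ∀ x, |w t x| ≤ M)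
    (hheat : ∀ t ∈ Set.Ico (0 : ℝ) T, ∀ x,
      HasDerivWithinAt (fun s => w s x) (-(graphLap G (w t) x)) (Set.Ico 0 T) t)
    (M₀ : ℝ) (hM₀ : 0 ≤ M₀) (h0 : ∀ x, |w 0 x| ≤ M₀) :
    ∀ t ∈ Set.Ico (0 : ℝ) T, ∀ x, |w t x| ≤ M₀ := by
  intro t ht x
  rw [abs_le]
  constructor
  · have hnegheat : ∀ t ∈ Set.Ico (0 : ℝ) T, ∀ x, HasDerivWithinAt
        (fun s => -(w s x)) (-(graphLap G (fun y => -(w t y)) x)) (Set.Ico 0 T) t := by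
      intro t ht x
      have := (hheat t ht x).fun_neg
      rw [show graphLap G (fun y => -(w t y)) x = -(graphLap G (w t) x) from
        graphLap_neg G (w t) x]
      simpa using this
    have := heat_max_principle G hG x₀ C hC hcurv T hT (fun s y => -(w s y)) M
      (fun t ht x => by simpa using hbdd t ht x) hnegheat M₀ hM₀
      (fun x => le_trans (neg_le_abs _) (h0 x)) t ht x
    linarith
  · exact heat_max_principle G hG x₀ C hC hcurv T hT w M hbdd hheat M₀ hM₀
      (fun x => le_trans (le_abs_self _) (h0 x)) t ht x

/-- **Uniqueness of bounded solutions of the heat equation under a weak curvature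
bound.**  Suppose there are `x₀ ∈ V` and `C ≥ 0` with `Δ d(·,x₀) ≥ -C`, where `d` is
the graph distance.  Then every bounded solution `u` of `∂u/∂t + Δu = 0` on
`[0,T) × V` satisfies `|u(t,x)| ≤ sup |u(0,·)|`, and bounded solutions are uniquely
determined by their initial condition. -/
theorem heat_equation_bounded_uniqueness
    {V : Type*} [Countable V] (G : SimpleGraph V) [G.LocallyFinite]
    (hG : G.Connected)
    (x₀ : V) (C : ℝ) (hC : 0 ≤ C)
    (hcurv : ∀ x, -C ≤ graphLap G (fun y => (G.dist y x₀ : ℝ)) x)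
    (T : ℝ) (hT : 0 < T)
    (u v : ℝ → V → ℝ)
    (hubdd : ∃ M, ∀ t ∈ Set.Ico (0 : ℝ) T, ∀ x, |u t x| ≤ M)
    (hvbdd : ∃ M, ∀ t ∈ Set.Ico (0 : ℝ) T, ∀ x, |v t x| ≤ M)
    (huheat : ∀ t ∈ Set.Ico (0 : ℝ) T, ∀ x,
      HasDerivWithinAt (fun s => u s x) (-(graphLap G (u t) x)) (Set.Ico 0 T) t)
    (hvheat : ∀ t ∈ Set.Ico (0 : ℝ) T, ∀ x,
      HasDerivWithinAt (fun s => v s x) (-(graphLap G (v t) x)) (Set.Ico 0 T) t) :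
    (∀ M₀ : ℝ, (∀ x, |u 0 x| ≤ M₀) →
      ∀ t ∈ Set.Ico (0 : ℝ) T, ∀ x, |u t x| ≤ M₀) ∧
    ((∀ x, u 0 x = v 0 x) → ∀ t ∈ Set.Ico (0 : ℝ) T, ∀ x, u t x = v t x) := by
  obtain ⟨Mu, hMu⟩ := hubdd
  obtain ⟨Mv, hMv⟩ := hvbdd
  have hne : Nonempty V := hG.nonempty
  constructor
  · intro M₀ hM₀ t ht x
    have hM₀0 : 0 ≤ M₀ := le_trans (abs_nonneg _) (hM₀ (Classical.arbitrary V))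
    exact heat_max_principle_abs G hG x₀ C hC hcurv T hT u Mu hMu huheat M₀ hM₀0 hM₀ t ht x
  · intro h0 t ht x
    have hwbdd : ∀ t ∈ Set.Ico (0 : ℝ) T, ∀ x, |u t x - v t x| ≤ Mu + Mv := by
      intro t ht x
      calc |u t x - v t x| ≤ |u t x| + |v t x| := abs_sub _ _
      _ ≤ Mu + Mv := add_le_add (hMu t ht x) (hMv t ht x)
    have hwheat : ∀ t ∈ Set.Ico (0 : ℝ) T, ∀ x, HasDerivWithinAt
        (fun s => u s x - v s x)
        (-(graphLap G (fun y => u t y - v t y) x)) (Set.Ico 0 T) t := by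
      intro t ht x
      have := (huheat t ht x).fun_sub (hvheat t ht x)
      rw [graphLap_sub]
      exact this.congr_deriv (by ring)
    have := heat_max_principle_abs G hG x₀ C hC hcurv T hT
      (fun s y => u s y - v s y) (Mu + Mv) hwbdd hwheat 0 le_rfl
      (fun x => by simp [h0 x]) t ht x
    have h2 : |u t x - v t x| ≤ 0 := this
    have := abs_nonneg (u t x - v t x)
    have : u t x - v t x = 0 := by
      rw [← abs_eq_zero]; linarith
    linarith
end
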